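/- arXiv:2205.09971 — 6 statements merged into one kernel-verified Lean document; each statement's English description precedes it below -/
import Mathlib

section
/- Let P and Q be predicates on subsets of a finite set F such that for every Z ⊆ F, P(Z) ↔ ¬Q(F \ Z), and suppose P is monotone (Z ⊆ Z' and P(Z) imply P(Z')) and Q is monotone. Let 𝔸 be the family of subset-minimal sets satisfying P and ℂ the family of subset-minimal sets satisfying Q. Then every element of 𝔸 is a minimal hitting set of ℂ. -/
lemma exists_minimal_subset {F : Type} [DecidableEq F] (Q : Finset F → Prop) :
    ∀ C : Finset F, Q C → ∃ C', C' ⊆ C ∧ Q C' ∧ ∀ C'' ⊂ C', ¬ Q C'' := by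
  intro C
  induction C using Finset.strongInductionOn with
  | _ C ih =>
    intro hQ
    by_cases h : ∃ D ⊂ C, Q D
    · obtain ⟨D, hD, hQD⟩ := h
      obtain ⟨C', hsub, h1, h2⟩ := ih D hD hQD
      exact ⟨C', hsub.trans hD.subset, h1, h2⟩
    · exact ⟨C, Finset.Subset.refl C, hQ, fun C'' hlt hq => h ⟨C'', hlt, hq⟩⟩

/-- If P and Q are monotone dual predicates on subsets of a finite set F
(P(Z) ↔ ¬Q(F \ Z)), then every subset-minimal set satisfying P is a minimal
hitting set of the family of subset-minimal sets satisfying Q. -/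
theorem axp_is_minimal_hitting_set_of_cxps {F : Type} [DecidableEq F] [Fintype F]
    (P Q : Finset F → Prop)
    (hdual : ∀ Z : Finset F, P Z ↔ ¬ Q (Finset.univ \ Z))
    (hPmono : ∀ ⦃Z Z' : Finset F⦄, Z ⊆ Z' → P Z → P Z')
    (hQmono : ∀ ⦃Z Z' : Finset F⦄, Z ⊆ Z' → Q Z → Q Z')
    (A : Finset F) (hA : P A ∧ ∀ A' ⊂ A, ¬ P A') :
    (∀ C : Finset F, (Q C ∧ ∀ C' ⊂ C, ¬ Q C') → (A ∩ C).Nonempty) ∧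
      (∀ H ⊂ A, ¬ ∀ C : Finset F, (Q C ∧ ∀ C' ⊂ C, ¬ Q C') → (H ∩ C).Nonempty) := by
  constructor
  · intro C ⟨hQC, _⟩
    by_contra hempty
    rw [Finset.not_nonempty_iff_eq_empty] at hempty
    have hsub : C ⊆ Finset.univ \ A := by
      intro x hx
      simp only [Finset.mem_sdiff, Finset.mem_univ, true_and]
      intro hxA
      have : x ∈ A ∩ C := Finset.mem_inter.mpr ⟨hxA, hx⟩
      simp [hempty] at this
    exact (hdual A).mp hA.1 (hQmono hsub hQC)
  · intro H hH hhit
    have hnP : ¬ P H := hA.2 H hH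
    have hQ : Q (Finset.univ \ H) := by
      by_contra hq
      exact hnP ((hdual H).mpr hq)
    obtain ⟨C, hsub, hQC, hmin⟩ := exists_minimal_subset Q _ hQ
    obtain ⟨x, hx⟩ := hhit C ⟨hQC, hmin⟩
    rw [Finset.mem_inter] at hx
    have := hsub hx.2
    simp [Finset.mem_sdiff] at this
    exact this hx.1
end

section
/- Let P and Q be predicates on subsets of a finite set F such that for every Z ⊆ F, P(Z) ↔ ¬Q(F \ Z), and suppose P and Q are both monotone. Let 𝔸 be the family of subset-minimal sets satisfying P and ℂ the family of subset-minimal sets satisfying Q. Then every element of ℂ is a minimal hitting set of 𝔸. -/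
lemma exists_min_subset {F : Type} [DecidableEq F] (P : Finset F → Prop)
    (S : Finset F) (hS : P S) : ∃ A ⊆ S, P A ∧ ∀ A' ⊂ A, ¬ P A' := by
  classical
  induction S using Finset.strongInduction with
  | _ S ih =>
    by_cases h : ∀ A' ⊂ S, ¬P A'
    · exact ⟨S, subset_rfl, hS, h⟩
    · push_neg at h
      obtain ⟨A', hsub, hP⟩ := h
      obtain ⟨A, hA, hPA, hmin⟩ := ih A' hsub hP
      exact ⟨A, hA.trans hsub.subset, hPA, hmin⟩

/-- If P and Q are monotone dual predicates on subsets of a finite set F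
(P(Z) ↔ ¬Q(F \ Z)), then every subset-minimal set satisfying Q is a minimal
hitting set of the family of subset-minimal sets satisfying P. -/
theorem cxp_is_minimal_hitting_set_of_axps {F : Type} [DecidableEq F] [Fintype F]
    (P Q : Finset F → Prop)
    (hdual : ∀ Z : Finset F, P Z ↔ ¬ Q (Finset.univ \ Z))
    (hPmono : ∀ ⦃Z Z' : Finset F⦄, Z ⊆ Z' → P Z → P Z')
    (hQmono : ∀ ⦃Z Z' : Finset F⦄, Z ⊆ Z' → Q Z → Q Z')
    (C : Finset F) (hC : Q C ∧ ∀ C' ⊂ C, ¬ Q C') :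
    (∀ A : Finset F, (P A ∧ ∀ A' ⊂ A, ¬ P A') → (C ∩ A).Nonempty) ∧
      (∀ H ⊂ C, ¬ ∀ A : Finset F, (P A ∧ ∀ A' ⊂ A, ¬ P A') → (H ∩ A).Nonempty) := by
  constructor
  · rintro A ⟨hPA, -⟩
    by_contra hne
    rw [Finset.not_nonempty_iff_eq_empty] at hne
    have hsub : A ⊆ Finset.univ \ C := by
      intro x hx
      simp only [Finset.mem_sdiff, Finset.mem_univ, true_and]
      intro hxC
      have : x ∈ C ∩ A := Finset.mem_inter.mpr ⟨hxC, hx⟩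
      simp [hne] at this
    have hPUC : P (Finset.univ \ C) := hPmono hsub hPA
    have := (hdual (Finset.univ \ C)).mp hPUC
    rw [Finset.sdiff_sdiff_self_left, Finset.univ_inter] at this
    exact this hC.1
  · intro H hH hall
    have hnQH : ¬ Q H := hC.2 H hH
    have hPUH : P (Finset.univ \ H) := by
      rw [hdual, Finset.sdiff_sdiff_self_left, Finset.univ_inter]
      exact hnQH
    obtain ⟨A, hAsub, hPA, hmin⟩ := exists_min_subset P _ hPUH
    have := hall A ⟨hPA, hmin⟩
    obtain ⟨x, hx⟩ := this
    rw [Finset.mem_inter] at hx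
    have := hAsub hx.2
    simp [Finset.mem_sdiff] at this
    exact this hx.1
end

section
/- For the Boolean function f(x₁,…,xₘ) = ⋁ᵢ xᵢ with m ≥ 2, any decision tree computing f exactly (where every internal node tests one variable, each variable is only tested when non-constant on the data reaching the node, and each path is logically consistent) contains a path of length m, consisting of literals xᵢ₁ = 0, …, x_{i_{m-1}} = 0, x_{iₘ} = 1, whose consistent instance has an AXp of size 1. -/
/-- Binary decision trees over Boolean features. -/
inductive DTree (m : ℕ) : Type where
  | leaf (b : Bool) : DTree m
  | node (i : Fin m) (t0 t1 : DTree m) : DTree m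

/-- Evaluation of a decision tree on a point. -/
def DTree.eval {m : ℕ} : DTree m → (Fin m → Bool) → Bool
  | .leaf b, _ => b
  | .node i t0 t1, x => if x i then (t1.eval x) else (t0.eval x)

/-- The (unique) root-to-leaf path consistent with a point, as the list of
(feature, value) literals tested along it. -/
def DTree.path {m : ℕ} : DTree m → (Fin m → Bool) → List (Fin m × Bool)
  | .leaf _, _ => []
  | .node i t0 t1, x =>
      (i, x i) :: (if x i then (t1.path x) else (t0.path x))

/-!
The all-false point is classified `false`, so its path must test every feature (an untested one
could be switched on without changing the value); with no feature repeated, that path has length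
`m`. Switching on the last feature tested along it keeps the first `m - 1` literals and flips the
last one, and the resulting path cannot continue. At that point the single feature switched on
already forces the value `true` of the OR, while fixing nothing does not: it is an AXp of size 1.
-/

namespace DTree

variable {m : ℕ}

theorem apply_eq_of_mem_path {T : DTree m} {x : Fin m → Bool} {p : Fin m × Bool}
    (hp : p ∈ T.path x) : x p.1 = p.2 := by
  induction T with
  | leaf => simp [path] at hp
  | node i t0 t1 ih0 ih1 =>
    simp only [path, List.mem_cons] at hp
    rcases hp with rfl | hp
    · rfl
    · cases hi : x i <;> simp only [hi] at hp
      exacts [ih0 hp, ih1 hp]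

theorem eval_eq_of_agree_on_path {T : DTree m} {x y : Fin m → Bool}
    (h : ∀ p ∈ T.path x, y p.1 = p.2) : T.eval y = T.eval x := by
  induction T with
  | leaf => rfl
  | node i t0 t1 ih0 ih1 =>
    have hi : y i = x i := h (i, x i) List.mem_cons_self
    cases hx : x i
    · simpa [eval, hi, hx] using ih0 fun p hp => h p (by simp [path, hx, hp])
    · simpa [eval, hi, hx] using ih1 fun p hp => h p (by simp [path, hx, hp])

theorem eval_update_of_notMem_path {T : DTree m} {x : Fin m → Bool} {i : Fin m}
    (hi : i ∉ (T.path x).map Prod.fst) (b : Bool) :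
    T.eval (Function.update x i b) = T.eval x := by
  refine eval_eq_of_agree_on_path fun p hp => ?_
  have hne : p.1 ≠ i := by rintro rfl; exact hi (List.mem_map_of_mem hp)
  rw [Function.update_of_ne hne, apply_eq_of_mem_path hp]

theorem length_path_le {T : DTree m} {x : Fin m → Bool}
    (hnodup : ((T.path x).map Prod.fst).Nodup) : (T.path x).length ≤ m := by
  simpa using hnodup.length_le_card

theorem exists_path_eq_append_of_agree {T : DTree m} {x y : Fin m → Bool} {j : Fin m} {b : Bool}
    {pre s : List (Fin m × Bool)} (hx : T.path x = pre ++ (j, b) :: s)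
    (hy : ∀ p ∈ pre, y p.1 = p.2) : ∃ rest, T.path y = pre ++ (j, y j) :: rest := by
  induction T generalizing pre with
  | leaf => simp [path] at hx
  | node i t0 t1 ih0 ih1 =>
    rcases pre with _ | ⟨q, pre⟩
    · simp only [path, List.nil_append, List.cons.injEq, Prod.mk.injEq] at hx
      obtain ⟨⟨rfl, -⟩, -⟩ := hx
      exact ⟨_, rfl⟩
    · simp only [path, List.cons_append, List.cons.injEq] at hx
      obtain ⟨rfl, hx⟩ := hx
      have hyi : y i = x i := hy _ List.mem_cons_self
      have hy' : ∀ p ∈ pre, y p.1 = p.2 := fun p hp => hy p (List.mem_cons_of_mem _ hp)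
      cases hxi : x i <;> simp only [hxi, Bool.false_eq_true, if_false, if_true] at hx
      · obtain ⟨rest, h⟩ := ih0 hx hy'
        exact ⟨rest, by simp [path, hyi, hxi, h]⟩
      · obtain ⟨rest, h⟩ := ih1 hx hy'
        exact ⟨rest, by simp [path, hyi, hxi, h]⟩

/-- The new path cannot go on past the flipped literal: no untested feature is left. -/
theorem path_update_of_length_eq {T : DTree m}
    (hnodup : ∀ x, ((T.path x).map Prod.fst).Nodup) {x : Fin m → Bool} {j : Fin m} {b : Bool}
    {pre : List (Fin m × Bool)} (hx : T.path x = pre ++ [(j, b)]) (hlen : (T.path x).length = m)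
    (c : Bool) : T.path (Function.update x j c) = pre ++ [(j, c)] := by
  have hj : j ∉ pre.map Prod.fst := by
    have := hnodup x
    rw [hx, List.map_append, List.nodup_append] at this
    exact fun hmem => this.2.2 _ hmem _ (List.mem_singleton_self _) rfl
  have hagree : ∀ p ∈ pre, Function.update x j c p.1 = p.2 := by
    intro p hp
    have hne : p.1 ≠ j := by rintro rfl; exact hj (List.mem_map_of_mem hp)
    rw [Function.update_of_ne hne]
    exact apply_eq_of_mem_path (hx ▸ List.mem_append_left _ hp)
  obtain ⟨rest, hrest⟩ := exists_path_eq_append_of_agree hx hagree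
  have hle := length_path_le (hnodup (Function.update x j c))
  rw [hx] at hlen
  rw [hrest] at hle ⊢
  simp only [List.length_append, List.length_cons, List.length_nil] at hlen hle
  obtain rfl : rest = [] := List.length_eq_zero_iff.mp (by omega)
  simp

def IsWeakAXp (T : DTree m) (x : Fin m → Bool) (X : Finset (Fin m)) : Prop :=
  ∀ y, (∀ i ∈ X, y i = x i) → T.eval y = T.eval x

def IsAXp (T : DTree m) (x : Fin m → Bool) (X : Finset (Fin m)) : Prop :=
  T.IsWeakAXp x X ∧ ∀ X' ⊂ X, ¬ T.IsWeakAXp x X'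

end DTree

section OrFunction

variable {m : ℕ} {T : DTree m} (hexact : ∀ x, T.eval x = true ↔ ∃ i, x i = true)
include hexact

theorem DTree.eval_false_of_or : T.eval (fun _ => false) = false := by
  simpa using (hexact fun _ => false).not

/-- An untested feature could be switched on without changing the value. -/
theorem DTree.mem_path_false_of_or (i : Fin m) : i ∈ (T.path fun _ => false).map Prod.fst := by
  by_contra hi
  have := (hexact _).mpr ⟨i, Function.update_self i true fun _ => false⟩
  rw [eval_update_of_notMem_path hi, eval_false_of_or hexact] at this
  exact Bool.false_ne_true this

theorem DTree.length_path_false_of_or (hnodup : ((T.path fun _ => false).map Prod.fst).Nodup) :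
    (T.path fun _ => false).length = m := by
  have huniv : ((T.path fun _ => false).map Prod.fst).toFinset = Finset.univ :=
    Finset.eq_univ_of_forall fun i => List.mem_toFinset.mpr (mem_path_false_of_or hexact i)
  simpa [huniv] using (List.toFinset_card_of_nodup hnodup).symm

theorem DTree.isAXp_singleton_of_or {x : Fin m → Bool} {j : Fin m} (hj : x j = true) :
    T.IsAXp x {j} := by
  have hx : T.eval x = true := (hexact x).mpr ⟨j, hj⟩
  refine ⟨fun y hy => ?_, fun X' hX' hsuff => ?_⟩
  · rw [hx, hexact]
    exact ⟨j, (hy j (Finset.mem_singleton_self j)).trans hj⟩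
  · obtain rfl := Finset.eq_empty_of_ssubset_singleton hX'
    have := hsuff (fun _ => false) (by simp)
    rw [eval_false_of_or hexact, hx] at this
    exact Bool.false_ne_true this

end OrFunction

/-- Any decision tree computing the OR function f(x) = ⋁ᵢ xᵢ exactly (with no
feature repeated along any path, as implied by consistency and non-constancy
of tested features) contains a path of length m with literals
x_{i₁}=0, …, x_{i_{m-1}}=0, x_{iₘ}=1, whose consistent instance has an AXp of
size 1. -/
theorem or_dtree_has_long_path_with_unit_axp (m : ℕ) (hm : 2 ≤ m) (T : DTree m)
    (hexact : ∀ x, T.eval x = true ↔ ∃ i, x i = true)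
    (hnodup : ∀ x, ((T.path x).map Prod.fst).Nodup) :
    ∃ x : Fin m → Bool,
      (T.path x).length = m ∧
      (T.path x).map Prod.snd = List.replicate (m - 1) false ++ [true] ∧
      ∃ X : Finset (Fin m), X.card = 1 ∧
        (∀ y, (∀ i ∈ X, y i = x i) → T.eval y = T.eval x) ∧
        (∀ X' ⊂ X, ¬ ∀ y, (∀ i ∈ X', y i = x i) → T.eval y = T.eval x) := by
  set x₀ : Fin m → Bool := fun _ => false
  have hlen : (T.path x₀).length = m := DTree.length_path_false_of_or hexact (hnodup x₀)
  obtain hnil | ⟨pre, ⟨j, b⟩, hx₀⟩ := (T.path x₀).eq_nil_or_concat'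
  · rw [hnil, List.length_nil] at hlen
    omega
  have hpath := DTree.path_update_of_length_eq hnodup hx₀ hlen true
  have hprelen : pre.length + 1 = m := by simpa [hx₀] using hlen
  have hpre : pre.map Prod.snd = List.replicate (m - 1) false := by
    refine List.eq_replicate_iff.mpr ⟨by simp [← hprelen], ?_⟩
    simp only [List.mem_map]
    rintro _ ⟨p, hp, rfl⟩
    exact (DTree.apply_eq_of_mem_path (hx₀ ▸ List.mem_append_left _ hp)).symm
  refine ⟨Function.update x₀ j true, ?_, ?_, {j}, Finset.card_singleton j,
    DTree.isAXp_singleton_of_or hexact (Function.update_self j true x₀)⟩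
  · simp [hpath, hprelen]
  · simp [hpath, hpre]
end

section
/- Let Z ⊆ F be a weak AXp for an instance (v, c) of classifier κ, and define the restricted classifier κ_Z on the projected feature space 𝔽_Z by κ_Z(y) = 1 iff every x ∈ 𝔽 that projects to y on coordinates Z and satisfies the fixing of Z-coordinates to v has κ(x) = c. Then X ⊆ Z is an AXp of the restricted explanation problem (κ_Z, projection of v, 1) if and only if X is an AXp of the original problem (κ, v, c). -/
/-!
Pushing a set of coordinates of `Z` forward along `Z ↪ Fin m` turns the restricted weak-AXp
condition into the original one, since a point of `𝔽_Z` fixed on `S` is exactly the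
`Z`-projection of the points of `𝔽` fixed on `S`. The pushforward is an order embedding onto
the subsets of `Z`, which is a downward-closed family, so subset-minimality is transferred too.
-/

open Finset

namespace Finset

variable {α β : Type*}

theorem minimal_map_iff (e : α ↪ β) {P : Finset β → Prop} {T : Finset α} :
    Minimal (fun S ↦ P (S.map e)) T ↔ Minimal P (T.map e) := by
  rw [minimal_iff_forall_lt, minimal_iff_forall_lt]
  refine and_congr_right fun _ ↦ ⟨fun h X hX ↦ ?_, fun h S hS ↦ h (map_ssubset_map.2 hS)⟩
  obtain ⟨S, -, rfl⟩ := subset_map_iff.1 hX.subset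
  exact h (map_ssubset_map.1 hX)

end Finset

section Explanations

variable {ι K : Type*} {D : ι → Type*}

def IsWeakAXp (κ : (∀ i, D i) → K) (v : ∀ i, D i) (c : K) (X : Finset ι) : Prop :=
  ∀ x : ∀ i, D i, (∀ i ∈ X, x i = v i) → κ x = c

def restrictedClassifier (κ : (∀ i, D i) → K) (c : K) (Z : Finset ι) (y : ∀ i : Z, D i) :
    Prop :=
  ∀ x : ∀ i, D i, (∀ (i : ι) (h : i ∈ Z), x i = y ⟨i, h⟩) → κ x = c

theorem isWeakAXp_restrictedClassifier_iff (κ : (∀ i, D i) → K) (v : ∀ i, D i) (c : K)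
    {Z : Finset ι} (S : Finset Z) :
    IsWeakAXp (restrictedClassifier κ c Z) (fun i ↦ v i) True S ↔
      IsWeakAXp κ v c (S.map (.subtype (· ∈ Z))) := by
  simp only [IsWeakAXp, restrictedClassifier, eq_iff_iff, iff_true, mem_map,
    Function.Embedding.coe_subtype, forall_exists_index, and_imp, forall_apply_eq_imp_iff₂]
  refine ⟨fun h x hx ↦ h (fun i ↦ x i) hx x fun _ _ ↦ rfl, fun h y hy x hx ↦ h x fun i hi ↦ ?_⟩
  rw [hx i i.2]
  exact hy i hi

end Explanations

theorem restricted_axp_iff_axp_general {m : ℕ} {D : Fin m → Type} {K : Type}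
    (κ : (∀ i, D i) → K) (v : ∀ i, D i) (c : K)
    (Z : Finset (Fin m))
    (κZ : (∀ i : {i : Fin m // i ∈ Z}, D i.1) → Prop)
    (hκZ : ∀ y, κZ y ↔
      ∀ x : ∀ i, D i, (∀ (i : Fin m) (h : i ∈ Z), x i = y ⟨i, h⟩) → κ x = c)
    (X : Finset (Fin m)) (hXZ : X ⊆ Z) :
    ((∀ y : ∀ i : {i : Fin m // i ∈ Z}, D i.1,
        (∀ i ∈ X.subtype (· ∈ Z), y i = v i.1) → κZ y) ∧
      (∀ S ⊂ X.subtype (· ∈ Z),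
        ¬ ∀ y : ∀ i : {i : Fin m // i ∈ Z}, D i.1,
            (∀ i ∈ S, y i = v i.1) → κZ y)) ↔
    ((∀ x : ∀ i, D i, (∀ i ∈ X, x i = v i) → κ x = c) ∧
      (∀ X' ⊂ X, ¬ ∀ x : ∀ i, D i, (∀ i ∈ X', x i = v i) → κ x = c)) := by
  obtain rfl : κZ = restrictedClassifier κ c Z := funext fun y ↦ propext (hκZ y)
  have key : Minimal (IsWeakAXp (restrictedClassifier κ c Z) (fun i ↦ v i) True)
      (X.subtype (· ∈ Z)) ↔ Minimal (IsWeakAXp κ v c) X := by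
    rw [show IsWeakAXp (restrictedClassifier κ c Z) (fun i ↦ v i) True = _ from
      funext fun S ↦ propext (isWeakAXp_restrictedClassifier_iff κ v c S), minimal_map_iff,
      subtype_map_of_mem hXZ]
  simpa only [minimal_iff_forall_lt, IsWeakAXp, eq_iff_iff, iff_true] using key

/-- Let Z be a weak AXp for instance (v, c), and let κ_Z be the restricted
classifier on the projection onto Z (κ_Z(y) holds iff every point projecting
to y on Z is classified c). Then X ⊆ Z is an AXp of the restricted problem
(κ_Z, projection of v, 1) iff X is an AXp of the original problem (κ, v, c). -/
theorem restricted_axp_iff_axp {m : ℕ} {D : Fin m → Type} {K : Type}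
    (κ : (∀ i, D i) → K) (v : ∀ i, D i) (c : K) (hvc : κ v = c)
    (Z : Finset (Fin m))
    (hZ : ∀ x : ∀ i, D i, (∀ i ∈ Z, x i = v i) → κ x = c)
    (κZ : (∀ i : {i : Fin m // i ∈ Z}, D i.1) → Prop)
    (hκZ : ∀ y, κZ y ↔
      ∀ x : ∀ i, D i, (∀ (i : Fin m) (h : i ∈ Z), x i = y ⟨i, h⟩) → κ x = c)
    (X : Finset (Fin m)) (hXZ : X ⊆ Z) :
    ((∀ y : ∀ i : {i : Fin m // i ∈ Z}, D i.1,
        (∀ i ∈ X.subtype (· ∈ Z), y i = v i.1) → κZ y) ∧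
      (∀ S ⊂ X.subtype (· ∈ Z),
        ¬ ∀ y : ∀ i : {i : Fin m // i ∈ Z}, D i.1,
            (∀ i ∈ S, y i = v i.1) → κZ y)) ↔
    ((∀ x : ∀ i, D i, (∀ i ∈ X, x i = v i) → κ x = c) ∧
      (∀ X' ⊂ X, ¬ ∀ x : ∀ i, D i, (∀ i ∈ X', x i = v i) → κ x = c)) :=
  restricted_axp_iff_axp_general κ v c Z κZ hκZ X hXZ
end

section
/- Let Z ⊆ F be a weak AXp for an instance (v, c) of classifier κ, and let κ_Z be the restricted binary classifier on the projection to Z. Then every CXp Y of the restricted problem (κ_Z, projection of v, 1) is a subset of some CXp of the original problem (κ, v, c). -/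
lemma exists_minimal_subset_s13 {α : Type*} [DecidableEq α] (P : Finset α → Prop)
    (T : Finset α) (hT : P T) :
    ∃ Y ⊆ T, P Y ∧ ∀ Y' ⊂ Y, ¬ P Y' := by
  classical
  induction T using Finset.strongInduction with
  | _ T ih =>
    by_cases h : ∃ Y' ⊂ T, P Y'
    · obtain ⟨Y', hsub, hP⟩ := h
      obtain ⟨Y, hYsub, hPY, hmin⟩ := ih Y' hsub hP
      exact ⟨Y, hYsub.trans hsub.subset, hPY, hmin⟩
    · push_neg at h
      exact ⟨T, subset_rfl, hT, h⟩

/-- Let Z be a weak AXp for instance (v, c) and κ_Z the restricted binary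
classifier on the projection to Z. Every CXp of the restricted problem
(κ_Z, projection of v, 1) is a subset of some CXp of the original problem. -/
theorem restricted_cxp_subset_of_cxp {m : ℕ} {D : Fin m → Type} {K : Type}
    (κ : (∀ i, D i) → K) (v : ∀ i, D i) (c : K) (hvc : κ v = c)
    (Z : Finset (Fin m))
    (hZ : ∀ x : ∀ i, D i, (∀ i ∈ Z, x i = v i) → κ x = c)
    (κZ : (∀ i : {i : Fin m // i ∈ Z}, D i.1) → Prop)
    (hκZ : ∀ y, κZ y ↔
      ∀ x : ∀ i, D i, (∀ (i : Fin m) (h : i ∈ Z), x i = y ⟨i, h⟩) → κ x = c)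
    (S : Finset {i : Fin m // i ∈ Z})
    (hS : (∃ y : ∀ i : {i : Fin m // i ∈ Z}, D i.1,
             (∀ i ∉ S, y i = v i.1) ∧ ¬ κZ y) ∧
          (∀ S' ⊂ S, ¬ ∃ y : ∀ i : {i : Fin m // i ∈ Z}, D i.1,
             (∀ i ∉ S', y i = v i.1) ∧ ¬ κZ y)) :
    ∃ Y : Finset (Fin m),
      ((∃ x : ∀ i, D i, (∀ i ∉ Y, x i = v i) ∧ κ x ≠ c) ∧
        (∀ Y' ⊂ Y, ¬ ∃ x : ∀ i, D i, (∀ i ∉ Y', x i = v i) ∧ κ x ≠ c)) ∧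
      S.map ⟨Subtype.val, Subtype.val_injective⟩ ⊆ Y := by
  classical
  set P : Finset (Fin m) → Prop :=
    fun Y => ∃ x : ∀ i, D i, (∀ i ∉ Y, x i = v i) ∧ κ x ≠ c with hP
  set Smap : Finset (Fin m) := S.map ⟨Subtype.val, Subtype.val_injective⟩ with hSmap
  set T : Finset (Fin m) := Smap ∪ Zᶜ with hTdef
  -- T is a weak CXp
  have hPT : P T := by
    obtain ⟨y, hy_out, hy_not⟩ := hS.1
    rw [hκZ] at hy_not
    push_neg at hy_not
    obtain ⟨x, hxy, hxc⟩ := hy_not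
    refine ⟨x, fun i hi => ?_, hxc⟩
    have hiZ : i ∈ Z := by
      by_contra h
      exact hi (Finset.mem_union_right _ (Finset.mem_compl.2 h))
    have hiS : (⟨i, hiZ⟩ : {i : Fin m // i ∈ Z}) ∉ S := by
      intro hmem
      exact hi (Finset.mem_union_left _ (Finset.mem_map.2 ⟨_, hmem, rfl⟩))
    rw [hxy i hiZ, hy_out _ hiS]
  obtain ⟨Y, hYT, hPY, hYmin⟩ := exists_minimal_subset_s13 P T hPT
  refine ⟨Y, ⟨hPY, hYmin⟩, ?_⟩
  -- show Smap ⊆ Y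
  intro j hj
  by_contra hjY
  obtain ⟨jz, hjzS, rfl⟩ := Finset.mem_map.1 hj
  obtain ⟨x, hx_out, hxc⟩ := hPY
  set y' : ∀ i : {i : Fin m // i ∈ Z}, D i.1 := fun i => x i.1 with hy'
  set S' : Finset {i : Fin m // i ∈ Z} := S.filter (fun i => i.1 ∈ Y) with hS'
  have hS'sub : S' ⊂ S := by
    refine Finset.ssubset_iff_of_subset (Finset.filter_subset _ _) |>.2 ⟨jz, hjzS, ?_⟩
    simp only [hS', Finset.mem_filter]
    exact fun h => hjY h.2
  refine hS.2 S' hS'sub ⟨y', fun i hi => ?_, ?_⟩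
  · -- y' agrees with v off S'
    have hiY : (i : Fin m) ∉ Y := by
      intro hmem
      have hiT : (i : Fin m) ∈ T := hYT hmem
      have : (i : Fin m) ∈ Smap := by
        rcases Finset.mem_union.1 hiT with h | h
        · exact h
        · exact absurd i.2 (Finset.mem_compl.1 h)
      obtain ⟨iz, hizS, hval⟩ := Finset.mem_map.1 this
      have : iz = i := Subtype.ext hval
      subst this
      exact hi (Finset.mem_filter.2 ⟨hizS, hmem⟩)
    exact hx_out _ hiY
  · rw [hκZ]
    push_neg
    exact ⟨x, fun i h => rfl, hxc⟩
end

section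
/- Let T be a decision tree over features F with paths ℛ partitioned into 𝒫 (paths predicting c) and 𝒬 (paths predicting other classes), satisfying that each point of feature space is consistent with exactly one path and each path is consistent with some point. For an instance (v, c) consistent with path P ∈ 𝒫, every CXp of (v, c) is a subset of the set of features whose v-values are inconsistent with the literals of some single path Q ∈ 𝒬; consequently the number of CXp's of (v, c) is at most |𝒬|. -/
/-- In a decision tree whose paths partition feature space, every CXp of an
instance (v, c) consistent with a path P predicting c is a subset of the set
χ_I(v, Q) of features whose v-values are inconsistent with some single path Q
predicting another class; consequently, the number of CXp's is at most the
number of such paths. -/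
theorem cxp_subset_path_inconsistency {m : ℕ} {D : Fin m → Type} {K PathT : Type}
    [Fintype PathT]
    (allowed : PathT → ∀ i, Set (D i))
    (lbl : PathT → K)
    (κ : (∀ i, D i) → K)
    (hone : ∀ x : ∀ i, D i, ∃! p : PathT, ∀ i, x i ∈ allowed p i)
    (hnonempty : ∀ p : PathT, ∃ x : ∀ i, D i, ∀ i, x i ∈ allowed p i)
    (hlabel : ∀ (p : PathT) (x : ∀ i, D i), (∀ i, x i ∈ allowed p i) → κ x = lbl p)
    (v : ∀ i, D i) (c : K) (hvc : κ v = c)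
    (P : PathT) (hPv : ∀ i, v i ∈ allowed P i) (hPc : lbl P = c) :
    (∀ Y : Finset (Fin m),
      ((∃ x : ∀ i, D i, (∀ i ∉ Y, x i = v i) ∧ κ x ≠ c) ∧
        (∀ Y' ⊂ Y, ¬ ∃ x : ∀ i, D i, (∀ i ∉ Y', x i = v i) ∧ κ x ≠ c)) →
      ∃ q : PathT, lbl q ≠ c ∧ ∀ i ∈ Y, v i ∉ allowed q i) ∧
    Set.ncard {Y : Finset (Fin m) |
        (∃ x : ∀ i, D i, (∀ i ∉ Y, x i = v i) ∧ κ x ≠ c) ∧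
        (∀ Y' ⊂ Y, ¬ ∃ x : ∀ i, D i, (∀ i ∉ Y', x i = v i) ∧ κ x ≠ c)} ≤
      Nat.card {q : PathT // lbl q ≠ c} := by
  classical
  have key : ∀ Y : Finset (Fin m),
      ((∃ x : ∀ i, D i, (∀ i ∉ Y, x i = v i) ∧ κ x ≠ c) ∧
        (∀ Y' ⊂ Y, ¬ ∃ x : ∀ i, D i, (∀ i ∉ Y', x i = v i) ∧ κ x ≠ c)) →
      ∃ q : PathT, lbl q ≠ c ∧ ∀ i, i ∈ Y ↔ v i ∉ allowed q i := by
    rintro Y ⟨⟨x, hxv, hxc⟩, hmin⟩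
    obtain ⟨q, hq, -⟩ := hone x
    have hlq : lbl q ≠ c := by rw [← hlabel q x hq]; exact hxc
    refine ⟨q, hlq, fun i => ⟨fun hi hvi => ?_, fun hvi => ?_⟩⟩
    · apply hmin (Y.erase i) (Finset.erase_ssubset hi)
      refine ⟨Function.update x i (v i), fun j hj => ?_, ?_⟩
      · by_cases hji : j = i
        · subst hji; simp
        · rw [Function.update_of_ne hji]
          exact hxv j (by simpa [Finset.mem_erase, hji] using hj)
      · have hall : ∀ j, Function.update x i (v i) j ∈ allowed q j := by
          intro j
          by_cases hji : j = i
          · subst hji; simpa using hvi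
          · rw [Function.update_of_ne hji]; exact hq j
        rw [hlabel q _ hall]; exact hlq
    · by_contra hi
      exact hvi (hxv i hi ▸ hq i)
  refine ⟨fun Y hY => ?_, ?_⟩
  · obtain ⟨q, hq, hiff⟩ := key Y hY
    exact ⟨q, hq, fun i hi => (hiff i).1 hi⟩
  · have hcard : Nat.card {q : PathT // lbl q ≠ c}
        = Set.ncard {q : PathT | lbl q ≠ c} := rfl
    rw [hcard]
    apply Set.ncard_le_ncard_of_injOn
      (fun Y => if h : _ then (key Y h).choose else P)
    · intro Y hY
      rw [Set.mem_setOf_eq] at hY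
      show (if h : _ then (key Y h).choose else P) ∈ {q : PathT | lbl q ≠ c}
      rw [dif_pos hY]
      exact ((key Y hY).choose_spec).1
    · intro Y1 h1 Y2 h2 he
      rw [Set.mem_setOf_eq] at h1 h2
      dsimp only at he
      rw [dif_pos h1, dif_pos h2] at he
      have hi1 := (key Y1 h1).choose_spec.2
      have hi2 := (key Y2 h2).choose_spec.2
      ext i
      rw [hi1 i, he, ← hi2 i]
end
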